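/- Let n be a non-negative integer, let s be a complex number that is not a negative integer, and let p be a complex number that is not an integer. Then ∑_{k=0}^{n} (−1)^{n+k} · C(n,k) · C(s+k, k) · B(k, p) = B(n, p) · C(s+p, n), where for a natural number k, B(k,p) denotes Γ(k+1)/(Γ(p+1)·Γ(k−p+1)), C(s+p,n) = (s+p)(s+p−1)⋯(s+p−n+1)/n!, and C(n,k) is the ordinary binomial coefficient. -/

import Mathlib

/-!
Writing `B(k,p) = k! / (Γ(p+1) Γ(k-p+1))` and using `Γ(n-p+1) = (n-k)! C(n-p,n-k) Γ(k-p+1)`, one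
gets `C(n,k) B(k,p) = B(n,p) C(n-p,n-k)`. Together with `C(s+k,k) = (-1)^k C(-s-1,k)`, the sum
becomes `B(n,p) (-1)^n ∑ₖ C(-s-1,k) C(n-p,n-k)`, which by Chu–Vandermonde is
`B(n,p) (-1)^n C(n-p-s-1,n) = B(n,p) C(s+p,n)`.
-/

open Finset

/-- Generalized binomial coefficient `C(z,k) = z(z-1)⋯(z-k+1)/k!`. -/
noncomputable def cchoose (z : ℂ) (k : ℕ) : ℂ :=
  (∏ i ∈ Finset.range k, (z - i)) / (k.factorial : ℂ)

/-- Binomial coefficient `B(k,p) = Γ(k+1)/(Γ(p+1)·Γ(k-p+1))` for `k : ℕ`, `p : ℂ`. -/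
noncomputable def gchoose (k : ℕ) (p : ℂ) : ℂ :=
  Complex.Gamma (k + 1) / (Complex.Gamma (p + 1) * Complex.Gamma ((k : ℂ) - p + 1))

open Polynomial Complex

lemma Ring.neg_one_pow_mul_choose_neg {K : Type*} [Field K] [CharZero K] (r : K) (n : ℕ) :
    (-1) ^ n * Ring.choose (-r) n = Ring.choose (r + n - 1) n := by
  rw [Ring.choose_neg, Units.smul_def, zsmul_eq_mul, Int.cast_negOnePow_natCast, ← mul_assoc,
    ← mul_pow, neg_one_mul, neg_neg, one_pow, one_mul]

lemma Ring.choose_eq_ascPochhammer_eval_div {K : Type*} [Field K] [CharZero K] (r : K) (n : ℕ) :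
    Ring.choose r n = (ascPochhammer K n).eval (r - n + 1) / n.factorial := by
  rw [eq_div_iff (by exact_mod_cast n.factorial_ne_zero), mul_comm, ← nsmul_eq_mul, Ring.choose,
    Ring.factorial_nsmul_multichoose_eq_ascPochhammer, ascPochhammer_smeval_eq_eval]

lemma cchoose_eq_choose (z : ℂ) (k : ℕ) : cchoose z k = Ring.choose z k := by
  rw [cchoose, Ring.choose_eq_smul, ← descPochhammer_eval_eq_prod_range,
    descPochhammer_smeval_eq_ascPochhammer, ascPochhammer_smeval_eq_eval,
    ← descPochhammer_eval_eq_ascPochhammer, smul_eq_mul, div_eq_inv_mul]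

lemma cchoose_add_self (s : ℂ) (k : ℕ) :
    cchoose (s + k) k = (-1) ^ k * Ring.choose (-s - 1) k := by
  rw [cchoose_eq_choose, neg_sub_left, Ring.neg_one_pow_mul_choose_neg]
  ring_nf

lemma Gamma_natCast_sub_add_one_ne_zero {p : ℂ} (hp : ∀ m : ℤ, p ≠ m) (k : ℕ) :
    Gamma (k - p + 1) ≠ 0 :=
  Gamma_ne_zero fun m h ↦ hp (k + m + 1) (by push_cast; linear_combination -h)

lemma Gamma_natCast_sub_add_one_eq {p : ℂ} (hp : ∀ m : ℤ, p ≠ m) {k n : ℕ} (hkn : k ≤ n) :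
    Gamma (n - p + 1) = (n - k).factorial * Ring.choose (n - p) (n - k) * Gamma (k - p + 1) := by
  have hz : ∀ m : ℕ, (k - p + 1 : ℂ) ≠ -m := fun m h ↦
    hp (k + m + 1) (by push_cast; linear_combination -h)
  have hpoch := Gamma_add_nat_div_Gamma_eq (n := n - k) _ hz
  rw [div_eq_iff (Gamma_natCast_sub_add_one_ne_zero hp k)] at hpoch
  have hcast : ((n - k : ℕ) : ℂ) = n - k := Nat.cast_sub hkn
  have hleft : (k - p + 1 : ℂ) + (n - k : ℕ) = n - p + 1 := by rw [hcast]; ring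
  have hright : (n - p : ℂ) - (n - k : ℕ) + 1 = k - p + 1 := by rw [hcast]; ring
  rw [Ring.choose_eq_ascPochhammer_eval_div,
    mul_div_cancel₀ _ (by exact_mod_cast (n - k).factorial_ne_zero), hright, ← hpoch, hleft]

lemma natCast_choose_mul_gchoose {p : ℂ} (hp : ∀ m : ℤ, p ≠ m) {k n : ℕ} (hkn : k ≤ n) :
    (n.choose k : ℂ) * gchoose k p = gchoose n p * Ring.choose (n - p) (n - k) := by
  have hΓ := Gamma_natCast_sub_add_one_eq hp hkn
  have hΓk := Gamma_natCast_sub_add_one_ne_zero hp k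
  have hC : Ring.choose (n - p : ℂ) (n - k) ≠ 0 := fun h ↦
    Gamma_natCast_sub_add_one_ne_zero hp n (by rw [hΓ, h, mul_zero, zero_mul])
  have hfac : (n.choose k : ℂ) * k.factorial * (n - k).factorial = n.factorial := by
    exact_mod_cast Nat.choose_mul_factorial_mul_factorial hkn
  have hfac' : ((n - k).factorial : ℂ) ≠ 0 := by exact_mod_cast (n - k).factorial_ne_zero
  simp only [gchoose, Gamma_nat_eq_factorial]
  rw [hΓ, ← hfac]
  field_simp

theorem stmt_3_general (n : ℕ) (s p : ℂ)
    (hp : ∀ m : ℤ, p ≠ (m : ℂ)) :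
    ∑ k ∈ range (n + 1), (-1 : ℂ) ^ (n + k) * (n.choose k : ℂ) *
        cchoose (s + k) k * gchoose k p =
      gchoose n p * cchoose (s + p) n := by
  have hterm : ∀ k ∈ range (n + 1), (-1 : ℂ) ^ (n + k) * (n.choose k : ℂ) *
      cchoose (s + k) k * gchoose k p =
      gchoose n p * ((-1) ^ n * (Ring.choose (-s - 1) k * Ring.choose (n - p) (n - k))) := by
    intro k hk
    have hsign : (-1 : ℂ) ^ (n + k) * (-1) ^ k = (-1) ^ n := by
      rw [pow_add, mul_assoc, ← mul_pow, neg_one_mul, neg_neg, one_pow, mul_one]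
    rw [cchoose_add_self]
    linear_combination ((-1) ^ (n + k) * (-1) ^ k * Ring.choose (-s - 1) k) *
      natCast_choose_mul_gchoose hp (Nat.lt_succ_iff.mp (mem_range.mp hk)) +
      (gchoose n p * Ring.choose (-s - 1) k * Ring.choose (n - p) (n - k)) * hsign
  rw [sum_congr rfl hterm, ← mul_sum, ← mul_sum,
    ← Nat.sum_antidiagonal_eq_sum_range_succ
      (fun i j ↦ Ring.choose (-s - 1 : ℂ) i * Ring.choose (n - p : ℂ) j),
    ← Ring.add_choose_eq _ (Commute.all _ _), cchoose_eq_choose,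
    show -s - 1 + (n - p) = -(s + p - n + 1) by ring, Ring.neg_one_pow_mul_choose_neg]
  ring_nf

theorem stmt_3 (n : ℕ) (s p : ℂ)
    (hs : ∀ m : ℕ, s ≠ -((m : ℂ) + 1)) (hp : ∀ m : ℤ, p ≠ (m : ℂ)) :
    ∑ k ∈ range (n + 1), (-1 : ℂ) ^ (n + k) * (n.choose k : ℂ) *
        cchoose (s + k) k * gchoose k p =
      gchoose n p * cchoose (s + p) n :=
  stmt_3_general n s p hp
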